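/- arXiv:1506.02186 — 7 statements merged into one kernel-verified Lean document; each statement's English description precedes it below -/
import Mathlib

section
/- Let (u_k) and (a_k) be nonnegative real sequences and (S_k) a nondecreasing sequence with S_0 ≥ u_0². If for all k ≥ 0, u_k² ≤ S_k + Σ_{i=1}^{k} a_i u_i, then for all k, u_k ≤ (1/2)Σ_{i=1}^{k} a_i + sqrt((1/2 Σ_{i=1}^{k} a_i)² + S_k). -/
/-!
Let `j ≤ k` be an index at which `u` is largest among `u 0, …, u k`. Bounding every `u i` in the
recursion at `j` by `u j`, and `S j` by `S k`, gives the quadratic inequality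
`u j ^ 2 ≤ S k + (∑_{i=1}^k a i) * u j`, whose larger root is the claimed bound; and `u k ≤ u j`.
-/

open Finset

theorem le_half_add_sqrt_of_sq_le_add_mul {x b s : ℝ} (h : x ^ 2 ≤ s + b * x) :
    x ≤ 1 / 2 * b + Real.sqrt ((1 / 2 * b) ^ 2 + s) := by
  have hsq : (x - 1 / 2 * b) ^ 2 ≤ (1 / 2 * b) ^ 2 + s := by linarith
  have := Real.le_sqrt_of_sq_le hsq
  linarith

theorem sq_le_add_sum_mul_of_forall_le {u a S : ℕ → ℝ} (ha : ∀ k, 0 ≤ a k) (hS : Monotone S)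
    (hrec : ∀ k, u k ^ 2 ≤ S k + ∑ i ∈ Icc 1 k, a i * u i) {j k : ℕ} (hjk : j ≤ k)
    (huj : 0 ≤ u j) (hmax : ∀ i ≤ k, u i ≤ u j) :
    u j ^ 2 ≤ S k + (∑ i ∈ Icc 1 k, a i) * u j := calc
  u j ^ 2 ≤ S j + ∑ i ∈ Icc 1 j, a i * u i := hrec j
  _ ≤ S k + ∑ i ∈ Icc 1 j, a i * u j := by
    gcongr with i hi
    · exact hS hjk
    · exact ha i
    · exact hmax i ((mem_Icc.mp hi).2.trans hjk)
  _ ≤ S k + ∑ i ∈ Icc 1 k, a i * u j := by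
    gcongr _ + ?_
    exact sum_le_sum_of_subset_of_nonneg (Icc_subset_Icc le_rfl hjk)
      fun i _ _ => mul_nonneg (ha i) huj
  _ = S k + (∑ i ∈ Icc 1 k, a i) * u j := by rw [sum_mul]

theorem nonneg_sequence_bound_general
    (u a S : ℕ → ℝ)
    (hu : ∀ k, 0 ≤ u k) (ha : ∀ k, 0 ≤ a k)
    (hS : Monotone S)
    (hrec : ∀ k, u k ^ 2 ≤ S k + ∑ i ∈ Finset.Icc 1 k, a i * u i) :
    ∀ k, u k ≤ (1 / 2) * ∑ i ∈ Finset.Icc 1 k, a i +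
      Real.sqrt (((1 / 2) * ∑ i ∈ Finset.Icc 1 k, a i) ^ 2 + S k) := by
  intro k
  obtain ⟨j, hj, hmax⟩ := exists_max_image (range (k + 1)) u ⟨k, self_mem_range_succ k⟩
  have hjk : j ≤ k := Nat.lt_succ_iff.mp (mem_range.mp hj)
  have hmax' : ∀ i ≤ k, u i ≤ u j := fun i hi => hmax i (mem_range.mpr (Nat.lt_succ_of_le hi))
  calc u k ≤ u j := hmax' k le_rfl
    _ ≤ _ := le_half_add_sqrt_of_sq_le_add_mul
      (sq_le_add_sum_mul_of_forall_le ha hS hrec hjk (hu j) hmax')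

theorem nonneg_sequence_bound
    (u a S : ℕ → ℝ)
    (hu : ∀ k, 0 ≤ u k) (ha : ∀ k, 0 ≤ a k)
    (hS : Monotone S) (hS0 : u 0 ^ 2 ≤ S 0)
    (hrec : ∀ k, u k ^ 2 ≤ S k + ∑ i ∈ Finset.Icc 1 k, a i * u i) :
    ∀ k, u k ≤ (1 / 2) * ∑ i ∈ Finset.Icc 1 k, a i +
      Real.sqrt (((1 / 2) * ∑ i ∈ Finset.Icc 1 k, a i) ^ 2 + S k) :=
  nonneg_sequence_bound_general u a S hu ha hS hrec
end

section
/- Let (u_k), (a_k) be nonnegative sequences and (S_k) nondecreasing with S_0 ≥ u_0², satisfying u_k² ≤ S_k + Σ_{i=1}^{k} a_i u_i for all k. Then S_k + Σ_{i=1}^{k} a_i u_i ≤ (sqrt(S_k) + Σ_{i=1}^{k} a_i)². -/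
/-!
Write `B k = √(S k) + ∑_{i=1}^k a i`, which is nondecreasing. By strong induction `u k ≤ B k`:
bounding the earlier `u i` by `B k` turns the hypothesis at `k` into the quadratic inequality
`u k ^ 2 ≤ S k + (B k - √(S k) - a k) * B k + a k * u k`, whose larger root is at most `B k`.
Then `∑ a i * u i ≤ (B k - √(S k)) * B k`, and `S k + (B k - √(S k)) * B k ≤ B k ^ 2`.
-/

open Finset

lemma le_add_add_of_sq_le {x s A a : ℝ} (hs : 0 ≤ s) (hA : 0 ≤ A) (ha : 0 ≤ a)
    (h : x ^ 2 ≤ s ^ 2 + A * (s + A + a) + a * x) : x ≤ s + A + a := by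
  by_contra! hlt
  nlinarith [mul_pos (sub_pos.2 hlt) (by linarith : 0 < x + s + A),
    mul_nonneg hs (add_nonneg hA ha)]

lemma Finset.sum_mul_le_sum_mul_of_le {ι : Type*} {s : Finset ι} {a u : ι → ℝ} {B : ℝ}
    (ha : ∀ i ∈ s, 0 ≤ a i) (hu : ∀ i ∈ s, u i ≤ B) :
    ∑ i ∈ s, a i * u i ≤ (∑ i ∈ s, a i) * B := by
  rw [sum_mul]
  exact sum_le_sum fun i hi => mul_le_mul_of_nonneg_left (hu i hi) (ha i hi)

section

variable {u a S : ℕ → ℝ}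

lemma nonneg_of_sq_le_add_sum_Icc (hS : Monotone S)
    (hrec : ∀ k, u k ^ 2 ≤ S k + ∑ i ∈ Icc 1 k, a i * u i) (k : ℕ) : 0 ≤ S k :=
  (sq_nonneg _).trans ((by simpa using hrec 0 : u 0 ^ 2 ≤ S 0).trans (hS k.zero_le))

lemma monotone_sqrt_add_sum_Icc (ha : ∀ k, 0 ≤ a k) (hS : Monotone S) :
    Monotone fun k => √(S k) + ∑ i ∈ Icc 1 k, a i := fun _ _ hkl =>
  add_le_add (Real.sqrt_le_sqrt (hS hkl))
    (sum_le_sum_of_subset_of_nonneg (Icc_subset_Icc_right hkl) fun i _ _ => ha i)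

lemma le_sqrt_add_sum_Icc (ha : ∀ k, 0 ≤ a k) (hS : Monotone S)
    (hrec : ∀ k, u k ^ 2 ≤ S k + ∑ i ∈ Icc 1 k, a i * u i) (k : ℕ) :
    u k ≤ √(S k) + ∑ i ∈ Icc 1 k, a i := by
  induction k using Nat.strong_induction_on with
  | _ k ih =>
    cases k with
    | zero => simpa using (Real.abs_le_sqrt (by simpa using hrec 0)).trans' (le_abs_self _)
    | succ n =>
      have hsplit {f : ℕ → ℝ} := sum_Icc_succ_top (Nat.le_add_left 1 n) f
      have hprev : ∑ i ∈ Icc 1 n, a i * u i ≤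
          (∑ i ∈ Icc 1 n, a i) * (√(S (n + 1)) + ∑ i ∈ Icc 1 (n + 1), a i) :=
        sum_mul_le_sum_mul_of_le (fun i _ => ha i) fun i hi =>
          (ih i (Nat.lt_succ_of_le (mem_Icc.1 hi).2)).trans
            (monotone_sqrt_add_sum_Icc ha hS (Nat.le_succ_of_le (mem_Icc.1 hi).2))
      rw [hsplit, ← add_assoc] at hprev ⊢
      refine le_add_add_of_sq_le (Real.sqrt_nonneg _) (sum_nonneg fun i _ => ha i) (ha _) ?_
      rw [Real.sq_sqrt (nonneg_of_sq_le_add_sum_Icc hS hrec _)]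
      linarith [hrec (n + 1), hsplit (f := fun i => a i * u i)]

end

theorem nonneg_sequence_sum_bound_general
    (u a S : ℕ → ℝ)
    (ha : ∀ k, 0 ≤ a k)
    (hS : Monotone S)
    (hrec : ∀ k, u k ^ 2 ≤ S k + ∑ i ∈ Finset.Icc 1 k, a i * u i) :
    ∀ k, S k + ∑ i ∈ Finset.Icc 1 k, a i * u i ≤
      (Real.sqrt (S k) + ∑ i ∈ Finset.Icc 1 k, a i) ^ 2 := by
  intro k
  have hsum : ∑ i ∈ Icc 1 k, a i * u i ≤
      (∑ i ∈ Icc 1 k, a i) * (√(S k) + ∑ i ∈ Icc 1 k, a i) :=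
    sum_mul_le_sum_mul_of_le (fun i _ => ha i) fun i hi =>
      (le_sqrt_add_sum_Icc ha hS hrec i).trans
        (monotone_sqrt_add_sum_Icc ha hS (mem_Icc.1 hi).2)
  nlinarith [Real.sq_sqrt (nonneg_of_sq_le_add_sum_Icc hS hrec k), Real.sqrt_nonneg (S k),
    sum_nonneg fun i (_ : i ∈ Icc 1 k) => ha i]

theorem nonneg_sequence_sum_bound
    (u a S : ℕ → ℝ)
    (hu : ∀ k, 0 ≤ u k) (ha : ∀ k, 0 ≤ a k)
    (hS : Monotone S) (hS0 : u 0 ^ 2 ≤ S 0)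
    (hrec : ∀ k, u k ^ 2 ≤ S k + ∑ i ∈ Finset.Icc 1 k, a i * u i) :
    ∀ k, S k + ∑ i ∈ Finset.Icc 1 k, a i * u i ≤
      (Real.sqrt (S k) + ∑ i ∈ Finset.Icc 1 k, a i) ^ 2 :=
  nonneg_sequence_sum_bound_general u a S ha hS hrec
end

section
/- Let F be μ-strongly convex, κ > 0, G(x) = F(x) + (κ/2)‖x−y‖² with minimizer x* and minimum G*. If a point x̂ satisfies G(x̂) − G* ≤ ε, then for all x: F(x) ≥ F(x̂) + ⟨κ(y − x̂), x − x̂⟩ + (μ/2)‖x − x̂‖² + (κ+μ)⟨x̂ − x*, x − x̂⟩ − ε. -/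
open scoped RealInnerProductSpace
open Filter Topology

theorem approximate_lower_bound
    {p : ℕ} (F : EuclideanSpace ℝ (Fin p) → ℝ)
    (μ κ ε : ℝ) (hμ : 0 ≤ μ) (hκ : 0 < κ) (hε : 0 ≤ ε)
    (hstrong : ConvexOn ℝ Set.univ (fun x => F x - μ / 2 * ‖x‖ ^ 2))
    (y xstar xhat : EuclideanSpace ℝ (Fin p))
    (hmin : ∀ x, F xstar + κ / 2 * ‖xstar - y‖ ^ 2 ≤ F x + κ / 2 * ‖x - y‖ ^ 2)
    (happrox : (F xhat + κ / 2 * ‖xhat - y‖ ^ 2) -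
      (F xstar + κ / 2 * ‖xstar - y‖ ^ 2) ≤ ε) :
    ∀ x, F x ≥ F xhat + ⟪κ • (y - xhat), x - xhat⟫ + μ / 2 * ‖x - xhat‖ ^ 2 +
      (κ + μ) * ⟪xhat - xstar, x - xhat⟫ - ε := by
  intro x
  set G : EuclideanSpace ℝ (Fin p) → ℝ := fun z => F z + κ / 2 * ‖z - y‖ ^ 2 with hG
  set c : ℝ := κ + μ with hc
  have hc0 : 0 ≤ c := by positivity
  -- H := G - c/2 ‖·‖² is convex
  have hH : ConvexOn ℝ Set.univ (fun z => G z - c / 2 * ‖z‖ ^ 2) := by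
    have heq : (fun z : EuclideanSpace ℝ (Fin p) => G z - c / 2 * ‖z‖ ^ 2)
        = fun z => (F z - μ / 2 * ‖z‖ ^ 2) + (-(κ * ⟪z, y⟫) + κ / 2 * ‖y‖ ^ 2) := by
      funext z
      have := @norm_sub_sq_real (EuclideanSpace ℝ (Fin p)) _ _ z y
      simp only [hG, hc]
      nlinarith [this]
    rw [heq]
    refine hstrong.add ?_
    refine ⟨convex_univ, ?_⟩
    intro u _ v _ a b ha hb hab
    apply le_of_eq
    simp only [inner_add_left, real_inner_smul_left, smul_eq_mul]
    linear_combination (-(κ / 2 * ‖y‖ ^ 2)) * hab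
  -- strong convexity at the minimizer
  have hB : G xstar + c / 2 * ‖x - xstar‖ ^ 2 ≤ G x := by
    set D : ℝ := ‖x - xstar‖ ^ 2 with hD
    have key : ∀ t : ℝ, t ∈ Set.Ioo (0:ℝ) 1 →
        G xstar + c / 2 * (1 - t) * D ≤ G x := by
      intro t ht
      have ht0 : 0 < t := ht.1
      have ht1 : t < 1 := ht.2
      have hconv := hH.2 (Set.mem_univ x) (Set.mem_univ xstar)
        (le_of_lt ht0) (by linarith : (0:ℝ) ≤ 1 - t) (by ring : t + (1 - t) = 1)
      simp only [smul_eq_mul] at hconv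
      have hmin' : G xstar ≤ G (t • x + (1 - t) • xstar) := hmin _
      have hnz : ‖t • x + (1 - t) • xstar‖ ^ 2 = t ^ 2 * ‖x‖ ^ 2
          + 2 * (t * (1 - t)) * ⟪x, xstar⟫ + (1 - t) ^ 2 * ‖xstar‖ ^ 2 := by
        have h1 := @norm_add_sq_real (EuclideanSpace ℝ (Fin p)) _ _ (t • x) ((1 - t) • xstar)
        have h2 : ‖t • x‖ = t * ‖x‖ := by
          rw [norm_smul, Real.norm_eq_abs, abs_of_pos ht0]
        have h3 : ‖(1 - t) • xstar‖ = (1 - t) * ‖xstar‖ := by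
          rw [norm_smul, Real.norm_eq_abs, abs_of_pos (by linarith)]
        have h4 : ⟪t • x, (1 - t) • xstar⟫ = t * (1 - t) * ⟪x, xstar⟫ := by
          rw [real_inner_smul_left, real_inner_smul_right]; ring
        rw [h1, h2, h3, h4]; ring
      have hDx : D = ‖x‖ ^ 2 - 2 * ⟪x, xstar⟫ + ‖xstar‖ ^ 2 := by
        rw [hD]; exact norm_sub_sq_real x xstar
      have h6 : c / 2 * ‖t • x + (1 - t) • xstar‖ ^ 2
          = c / 2 * (t * ‖x‖ ^ 2 + (1 - t) * ‖xstar‖ ^ 2)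
            - c / 2 * (t * (1 - t)) * D := by
        rw [hnz, hDx]; ring
      have h5 : t * (G xstar + c / 2 * (1 - t) * D) ≤ t * G x := by
        clear hG hD hDx hc
        clear_value G c D
        linarith [hconv, hmin', h6]
      exact le_of_mul_le_mul_left h5 ht0
    have hlim : Tendsto (fun t : ℝ => G xstar + c / 2 * (1 - t) * D)
        (𝓝[>] (0:ℝ)) (𝓝 (G xstar + c / 2 * D)) := by
      have hcont : ContinuousAt (fun t : ℝ => G xstar + c / 2 * (1 - t) * D) 0 := by
        fun_prop
      have h := hcont.tendsto.mono_left (nhdsWithin_le_nhds (s := Set.Ioi (0:ℝ)))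
      simpa using h
    refine le_of_tendsto hlim ?_
    filter_upwards [Ioo_mem_nhdsGT_of_mem (by constructor <;> norm_num :
      (0:ℝ) ∈ Set.Ico (0:ℝ) 1)] with t ht using key t ht
  -- final algebra
  have hB' : F xstar + κ / 2 * ‖xstar - y‖ ^ 2 + (κ + μ) / 2 * ‖x - xstar‖ ^ 2
      ≤ F x + κ / 2 * ‖x - y‖ ^ 2 := by
    have := hB
    simp only [hG, hc] at this
    linarith
  have e1 : ‖x - y‖ ^ 2 = ‖x - xhat‖ ^ 2 - 2 * ⟪x - xhat, y - xhat⟫ + ‖y - xhat‖ ^ 2 := by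
    have := @norm_sub_sq_real (EuclideanSpace ℝ (Fin p)) _ _ (x - xhat) (y - xhat)
    rw [show x - xhat - (y - xhat) = x - y by abel] at this
    linarith
  have e2 : ‖xhat - y‖ ^ 2 = ‖y - xhat‖ ^ 2 := by rw [norm_sub_rev]
  have e3 : ‖x - xstar‖ ^ 2 = ‖x - xhat‖ ^ 2 + 2 * ⟪x - xhat, xhat - xstar⟫
      + ‖xhat - xstar‖ ^ 2 := by
    have := @norm_add_sq_real (EuclideanSpace ℝ (Fin p)) _ _ (x - xhat) (xhat - xstar)
    rw [show x - xhat + (xhat - xstar) = x - xstar by abel] at this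
    linarith
  have e4 : ⟪κ • (y - xhat), x - xhat⟫ = κ * ⟪x - xhat, y - xhat⟫ := by
    rw [real_inner_smul_left, real_inner_comm]
  have e5 : ⟪xhat - xstar, x - xhat⟫ = ⟪x - xhat, xhat - xstar⟫ := real_inner_comm _ _
  have hv : (0:ℝ) ≤ (κ + μ) / 2 * ‖xhat - xstar‖ ^ 2 := by positivity
  rw [e1, e3] at hB'
  rw [e2] at happrox
  rw [ge_iff_le, e4, e5]
  linarith [hB', happrox, hv]
end

section
/- Let F be μ-strongly convex with μ > 0, κ > 0, and y₁, y₂ ∈ ℝ^p. Define G_j(x) = F(x) + (κ/2)‖x − y_j‖² with minimizers x_j* and minima G_j* for j = 1,2. Suppose x̂ satisfies G₁(x̂) − G₁* ≤ ε. Then G₂(x̂) − G₂* ≤ 2ε + (κ²/(κ+μ))‖y₂ − y₁‖². -/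
open scoped RealInnerProductSpace

lemma strong_min_aux {E : Type*} [NormedAddCommGroup E] [InnerProductSpace ℝ E]
    {g : E → ℝ} {c : ℝ}
    (hconv : ConvexOn ℝ Set.univ (fun x => g x - c / 2 * ‖x‖ ^ 2))
    {xs : E} (hmin : ∀ x, g xs ≤ g x) (x : E) :
    g xs + c / 2 * ‖x - xs‖ ^ 2 ≤ g x := by
  have hs : StrongConvexOn Set.univ c g := strongConvexOn_iff_convex.mpr hconv
  have key : ∀ t : ℝ, t ∈ Set.Ioo (0:ℝ) 1 →
      c / 2 * ((1 - t) * ‖x - xs‖ ^ 2) ≤ g x - g xs := by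
    rintro t ⟨ht0, ht1⟩
    have h := hs.2 (Set.mem_univ x) (Set.mem_univ xs) ht0.le
      (by linarith : (0:ℝ) ≤ 1 - t) (by ring)
    have h2 := hmin (t • x + (1 - t) • xs)
    simp only [smul_eq_mul] at h
    have h3 : t * (c / 2 * ((1 - t) * ‖x - xs‖ ^ 2)) ≤ t * (g x - g xs) := by
      nlinarith [h, h2]
    exact le_of_mul_le_mul_left (by linarith) ht0
  have hten : Filter.Tendsto (fun t : ℝ => c / 2 * ((1 - t) * ‖x - xs‖ ^ 2))
      (nhdsWithin 0 (Set.Ioo 0 1)) (nhds (c / 2 * ‖x - xs‖ ^ 2)) := by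
    have hcont : Continuous (fun t : ℝ => c / 2 * ((1 - t) * ‖x - xs‖ ^ 2)) := by
      continuity
    have := (hcont.tendsto 0).mono_left
      (nhdsWithin_le_nhds : nhdsWithin (0:ℝ) (Set.Ioo 0 1) ≤ _)
    simpa using this
  have hne : (nhdsWithin (0:ℝ) (Set.Ioo 0 1)).NeBot :=
    mem_closure_iff_nhdsWithin_neBot.mp
      (by rw [closure_Ioo one_ne_zero.symm]; exact ⟨le_refl 0, zero_le_one⟩)
  have := le_of_tendsto hten (Filter.eventually_of_mem self_mem_nhdsWithin key)
  linarith

theorem subproblem_warm_start_bound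
    {p : ℕ} (F : EuclideanSpace ℝ (Fin p) → ℝ)
    (μ κ ε : ℝ) (hμ : 0 < μ) (hκ : 0 < κ) (hε : 0 ≤ ε)
    (hstrong : ConvexOn ℝ Set.univ (fun x => F x - μ / 2 * ‖x‖ ^ 2))
    (y₁ y₂ x₁star x₂star xhat : EuclideanSpace ℝ (Fin p))
    (hmin₁ : ∀ x, F x₁star + κ / 2 * ‖x₁star - y₁‖ ^ 2 ≤ F x + κ / 2 * ‖x - y₁‖ ^ 2)
    (hmin₂ : ∀ x, F x₂star + κ / 2 * ‖x₂star - y₂‖ ^ 2 ≤ F x + κ / 2 * ‖x - y₂‖ ^ 2)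
    (happrox : (F xhat + κ / 2 * ‖xhat - y₁‖ ^ 2) -
      (F x₁star + κ / 2 * ‖x₁star - y₁‖ ^ 2) ≤ ε) :
    (F xhat + κ / 2 * ‖xhat - y₂‖ ^ 2) - (F x₂star + κ / 2 * ‖x₂star - y₂‖ ^ 2) ≤
      2 * ε + κ ^ 2 / (κ + μ) * ‖y₂ - y₁‖ ^ 2 := by
  have hK : (0:ℝ) < κ + μ := by linarith
  -- strong convexity of G₁ with modulus κ+μ
  have hGconv : ConvexOn ℝ Set.univ
      (fun x => (F x + κ / 2 * ‖x - y₁‖ ^ 2) - (κ + μ) / 2 * ‖x‖ ^ 2) := by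
    have haff : ConvexOn ℝ Set.univ
        (fun x : EuclideanSpace ℝ (Fin p) => κ / 2 * ‖y₁‖ ^ 2 - κ * ⟪x, y₁⟫) := by
      refine ⟨convex_univ, fun x _ z _ a b ha hb hab => ?_⟩
      have hin : ⟪a • x + b • z, y₁⟫ = a * ⟪x, y₁⟫ + b * ⟪z, y₁⟫ := by
        rw [inner_add_left, real_inner_smul_left, real_inner_smul_left]
      simp only [smul_eq_mul, hin]
      have hb' : b = 1 - a := by linarith
      subst hb'
      apply le_of_eq
      ring
    have heq : (fun x : EuclideanSpace ℝ (Fin p) =>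
        (F x + κ / 2 * ‖x - y₁‖ ^ 2) - (κ + μ) / 2 * ‖x‖ ^ 2)
        = fun x => (F x - μ / 2 * ‖x‖ ^ 2) + (κ / 2 * ‖y₁‖ ^ 2 - κ * ⟪x, y₁⟫) := by
      funext x
      rw [norm_sub_sq_real]
      ring
    rw [heq]
    exact hstrong.add haff
  have hA := strong_min_aux (c := κ + μ) hGconv hmin₁ xhat
  have hB := strong_min_aux (c := κ + μ) hGconv hmin₁ x₂star
  -- Young-type inequality
  have hy : ∀ u v : EuclideanSpace ℝ (Fin p),
      κ * ⟪u, v⟫ ≤ (κ + μ) / 2 * ‖u‖ ^ 2 + κ ^ 2 / (2 * (κ + μ)) * ‖v‖ ^ 2 := by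
    intro u v
    have h0 : (0:ℝ) ≤ ‖(κ + μ) • u - κ • v‖ ^ 2 := sq_nonneg _
    rw [norm_sub_sq_real, norm_smul, norm_smul, real_inner_smul_left,
      real_inner_smul_right, Real.norm_eq_abs, Real.norm_eq_abs,
      abs_of_pos hK, abs_of_pos hκ] at h0
    have key : κ * ⟪u, v⟫ - (κ + μ) / 2 * ‖u‖ ^ 2 ≤ κ ^ 2 * ‖v‖ ^ 2 / (2 * (κ + μ)) := by
      rw [le_div_iff₀ (by positivity)]
      nlinarith [h0]
    have heq2 : κ ^ 2 / (2 * (κ + μ)) * ‖v‖ ^ 2 = κ ^ 2 * ‖v‖ ^ 2 / (2 * (κ + μ)) := by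
      ring
    linarith [key, heq2.le, heq2.ge]
  have hy1 := hy (x₂star - x₁star) (y₂ - y₁)
  have hy2 := hy (x₁star - xhat) (y₂ - y₁)
  have hi1 : κ * ⟪x₂star - x₁star, y₂ - y₁⟫ = κ * ⟪x₂star, y₂ - y₁⟫ - κ * ⟪x₁star, y₂ - y₁⟫ := by
    rw [inner_sub_left]; ring
  have hi2 : κ * ⟪x₁star - xhat, y₂ - y₁⟫ = κ * ⟪x₁star, y₂ - y₁⟫ - κ * ⟪xhat, y₂ - y₁⟫ := by
    rw [inner_sub_left]; ring
  have hnr : ‖x₁star - xhat‖ ^ 2 = ‖xhat - x₁star‖ ^ 2 := by rw [norm_sub_rev]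
  have hid : ∀ x : EuclideanSpace ℝ (Fin p),
      ‖x - y₂‖ ^ 2 = ‖x - y₁‖ ^ 2 + ‖y₂‖ ^ 2 - ‖y₁‖ ^ 2 - 2 * ⟪x, y₂ - y₁⟫ := by
    intro x
    rw [norm_sub_sq_real, norm_sub_sq_real, inner_sub_right]
    ring
  have hdiv : κ ^ 2 / (κ + μ) * ‖y₂ - y₁‖ ^ 2
      = 2 * (κ ^ 2 / (2 * (κ + μ)) * ‖y₂ - y₁‖ ^ 2) := by
    field_simp
  rw [hid xhat, hid x₂star, hdiv]
  nlinarith [hA, hB, hy1, hy2, hi1, hi2, hnr, happrox, hK, hμ, hκ]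
end

section
/- Let q ∈ [0,1) and let (α_k) be a sequence in (0,1) with α_k² = (1−α_k)α_{k−1}² + q α_k for k ≥ 1, with α₀ = (√5 − 1)/2 and q = 0. Define λ₀ = 1 and λ_k = ∏_{i=0}^{k−1}(1−α_i). Then for all k ≥ 0: 2/(k+2)² ≤ λ_k ≤ 4/(k+2)². -/
/-!
Since `α₀² = 1 - α₀`, the recursion telescopes to `∏_{i ≤ k} (1 - α i) = α k ²`. Because
`t ↦ t² / (1 - t)` is increasing on `(0, 1)`, the bound `α k ≤ 2 / (k + 3)` propagates along the
recursion; it gives the upper bound through the identity, and the lower bound through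
`∏_{i < k} (i + 1) / (i + 3) = 2 / ((k + 1) (k + 2))`.
-/

open Finset

lemma le_two_div_add_one_of_sq_eq {a b x : ℝ} (ha : 0 ≤ a) (hb : 0 < b) (hx : 0 < x)
    (hab : b ^ 2 = (1 - b) * a ^ 2) (hax : a ≤ 2 / x) : b ≤ 2 / (x + 1) := by
  rw [le_div_iff₀ hx] at hax
  rw [le_div_iff₀ (by linarith)]
  have hb1 : 0 < 1 - b := by
    by_contra! h
    nlinarith [mul_nonneg (neg_nonneg.mpr h) (sq_nonneg a)]
  -- `(b x)² = (1 - b) (a x)² ≤ 4 (1 - b)`, which fails once `b (x + 1) > 2`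
  have hbx : (b * x) ^ 2 ≤ 4 * (1 - b) :=
    calc (b * x) ^ 2 = (1 - b) * (a * x) ^ 2 := by rw [mul_pow, hab]; ring
      _ ≤ (1 - b) * 4 := by gcongr; nlinarith [mul_nonneg ha hx.le]
      _ = 4 * (1 - b) := mul_comm _ _
  nlinarith

lemma prod_range_div_add_three (k : ℕ) :
    ∏ i ∈ range k, (((i : ℝ) + 1) / ((i : ℝ) + 3)) = 2 / (((k : ℝ) + 1) * ((k : ℝ) + 2)) := by
  induction k with
  | zero => norm_num
  | succ n ih =>
    rw [prod_range_succ, ih]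
    push_cast
    field_simp
    ring

section

variable {α : ℕ → ℝ} (hrec : ∀ k : ℕ, α (k + 1) ^ 2 = (1 - α (k + 1)) * α k ^ 2)
include hrec

lemma prod_range_succ_one_sub_eq_sq (hα0 : α 0 ^ 2 = 1 - α 0) (k : ℕ) :
    ∏ i ∈ range (k + 1), (1 - α i) = α k ^ 2 := by
  induction k with
  | zero => simp [hα0]
  | succ n ih => rw [prod_range_succ, ih, hrec n]; ring

lemma le_two_div_add_three (hpos : ∀ k, 0 < α k) (hα0 : α 0 ≤ 2 / 3) (k : ℕ) :
    α k ≤ 2 / ((k : ℝ) + 3) := by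
  induction k with
  | zero => simpa using hα0
  | succ n ih =>
    have h := le_two_div_add_one_of_sq_eq (hpos n).le (hpos (n + 1)) (by positivity) (hrec n) ih
    rwa [Nat.cast_succ, add_right_comm]

end

theorem lambda_growth_bounds
    (α : ℕ → ℝ)
    (hα0 : α 0 = (Real.sqrt 5 - 1) / 2)
    (hmem : ∀ k : ℕ, α k ∈ Set.Ioo (0 : ℝ) 1)
    (hrec : ∀ k : ℕ, α (k + 1) ^ 2 = (1 - α (k + 1)) * α k ^ 2) :
    ∀ k : ℕ, 2 / ((k : ℝ) + 2) ^ 2 ≤ ∏ i ∈ Finset.range k, (1 - α i) ∧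
      ∏ i ∈ Finset.range k, (1 - α i) ≤ 4 / ((k : ℝ) + 2) ^ 2 := by
  have hs5 : Real.sqrt 5 ^ 2 = 5 := Real.sq_sqrt (by norm_num)
  have hα0_sq : α 0 ^ 2 = 1 - α 0 := by rw [hα0]; nlinarith
  have hα0_le : α 0 ≤ 2 / 3 := by rw [hα0]; nlinarith [Real.sqrt_nonneg 5]
  have hbound := le_two_div_add_three hrec (fun k ↦ (hmem k).1) hα0_le
  intro k
  constructor
  · calc 2 / ((k : ℝ) + 2) ^ 2 ≤ 2 / (((k : ℝ) + 1) * ((k : ℝ) + 2)) := by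
          gcongr; nlinarith
      _ = ∏ i ∈ range k, (((i : ℝ) + 1) / ((i : ℝ) + 3)) := (prod_range_div_add_three k).symm
      _ ≤ ∏ i ∈ range k, (1 - α i) := by
          refine prod_le_prod (fun i _ ↦ by positivity) fun i _ ↦ ?_
          have : 2 / ((i : ℝ) + 3) = 1 - ((i : ℝ) + 1) / ((i : ℝ) + 3) := by field_simp; ring
          linarith [hbound i]
  · cases k with
    | zero => norm_num
    | succ n =>
      calc ∏ i ∈ range (n + 1), (1 - α i) = α n ^ 2 := prod_range_succ_one_sub_eq_sq hrec hα0_sq n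
        _ ≤ (2 / ((n : ℝ) + 3)) ^ 2 := pow_le_pow_left₀ (hmem n).1.le (hbound n) 2
        _ = 4 / (((n + 1 : ℕ) : ℝ) + 2) ^ 2 := by push_cast; field_simp; ring
end

section
/- Let f_i: ℝ^p → ℝ for i = 1,…,n each be μ-strongly convex and differentiable with L-Lipschitz gradient (L ≥ μ > 0), and δ ∈ (0,1]. Suppose d_i is a function with d_i ≤ f_i pointwise. Define d_i'(x) = (1−δ)d_i(x) + δ[f_i(z) + ⟨∇f_i(z), x−z⟩ + (μ/2)‖x−z‖²] for a given z ∈ ℝ^p. Then for all x: d_i'(x) ≥ d_i(x) − (δ(L−μ)/2)‖x − z‖². -/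
/-!
By the descent lemma, an `L`-Lipschitz gradient gives
`d x ≤ f x ≤ f z + ⟪f' z, x - z⟫ + L/2 ‖x - z‖²`, so the `μ`-quadratic model at `z` undershoots
`d x` by at most `(L - μ)/2 ‖x - z‖²`; mixing it in with weight `δ ≥ 0` costs at most `δ` times that.
-/

open scoped RealInnerProductSpace

section DescentLemma

variable {E : Type*} [NormedAddCommGroup E] [InnerProductSpace ℝ E] [CompleteSpace E]
  {f : E → ℝ} {f' : E → E}

theorem HasGradientAt.hasDerivAt_comp_add_smul {g z v : E} {t : ℝ}
    (h : HasGradientAt f g (z + t • v)) :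
    HasDerivAt (fun s : ℝ => f (z + s • v)) ⟪g, v⟫ t := by
  have hline : HasDerivAt (fun s : ℝ => z + s • v) v t := by
    simpa using ((hasDerivAt_id t).smul_const v).const_add z
  exact h.hasFDerivAt.comp_hasDerivAt t hline

theorem le_add_inner_add_sq_of_norm_sub_gradient_le {L : ℝ} {z : E}
    (hgrad : ∀ x, HasGradientAt f (f' x) x) (hlip : ∀ y, ‖f' y - f' z‖ ≤ L * ‖y - z‖)
    (x : E) : f x ≤ f z + ⟪f' z, x - z⟫ + L / 2 * ‖x - z‖ ^ 2 := by
  set v := x - z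
  -- `φ t` is the gap between `f` and the quadratic bound along the segment `z + t • v`.
  set φ : ℝ → ℝ := fun t => f (z + t • v) - t * ⟪f' z, v⟫ - L / 2 * t ^ 2 * ‖v‖ ^ 2
  have hφ : ∀ t, HasDerivAt φ (⟪f' (z + t • v), v⟫ - ⟪f' z, v⟫ - L * t * ‖v‖ ^ 2) t := by
    intro t
    have hquad := ((hasDerivAt_pow 2 t).const_mul (L / 2)).mul_const (‖v‖ ^ 2)
    refine (((hgrad _).hasDerivAt_comp_add_smul.sub ((hasDerivAt_id t).mul_const _)).sub
      hquad).congr_deriv ?_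
    push_cast; ring
  have hφ_nonpos : ∀ t ∈ interior (Set.Ici (0 : ℝ)),
      ⟪f' (z + t • v), v⟫ - ⟪f' z, v⟫ - L * t * ‖v‖ ^ 2 ≤ 0 := by
    intro t ht
    rw [interior_Ici, Set.mem_Ioi] at ht
    rw [sub_nonpos]
    have hstep : ‖f' (z + t • v) - f' z‖ ≤ L * (t * ‖v‖) := by
      simpa [norm_smul, abs_of_pos ht] using hlip (z + t • v)
    calc ⟪f' (z + t • v), v⟫ - ⟪f' z, v⟫
        = ⟪f' (z + t • v) - f' z, v⟫ := (inner_sub_left _ _ _).symm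
      _ ≤ ‖f' (z + t • v) - f' z‖ * ‖v‖ := real_inner_le_norm _ _
      _ ≤ L * (t * ‖v‖) * ‖v‖ := by gcongr
      _ = L * t * ‖v‖ ^ 2 := by ring
  have hanti : AntitoneOn φ (Set.Ici 0) :=
    antitoneOn_of_hasDerivWithinAt_nonpos (convex_Ici 0)
      (fun t _ => (hφ t).continuousAt.continuousWithinAt)
      (fun t _ => (hφ t).hasDerivWithinAt) hφ_nonpos
  have h01 : φ 1 ≤ φ 0 := hanti Set.self_mem_Ici (Set.mem_Ici.2 zero_le_one) zero_le_one
  simp only [φ, v, one_smul, zero_smul, add_zero, add_sub_cancel] at h01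
  linarith

end DescentLemma

theorem miso_lower_bound_maintenance_general
    {pdim : ℕ} (f : EuclideanSpace ℝ (Fin pdim) → ℝ)
    (f' : EuclideanSpace ℝ (Fin pdim) → EuclideanSpace ℝ (Fin pdim))
    (μ L δ : ℝ) (hδ : δ ∈ Set.Ioc (0 : ℝ) 1)
    (hgrad : ∀ x, HasGradientAt f (f' x) x)
    (hlip : ∀ x y, ‖f' x - f' y‖ ≤ L * ‖x - y‖)
    (d : EuclideanSpace ℝ (Fin pdim) → ℝ) (hd : ∀ x, d x ≤ f x)
    (z : EuclideanSpace ℝ (Fin pdim)) :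
    ∀ x, (1 - δ) * d x +
        δ * (f z + ⟪f' z, x - z⟫ + μ / 2 * ‖x - z‖ ^ 2) ≥
      d x - δ * (L - μ) / 2 * ‖x - z‖ ^ 2 := by
  intro x
  have hdescent := le_add_inner_add_sq_of_norm_sub_gradient_le hgrad (fun y => hlip y z) x
  have hgap : 0 ≤ δ * (f z + ⟪f' z, x - z⟫ + L / 2 * ‖x - z‖ ^ 2 - d x) :=
    mul_nonneg hδ.1.le (by linarith [hd x])
  linear_combination hgap

theorem miso_lower_bound_maintenance
    {pdim : ℕ} (f : EuclideanSpace ℝ (Fin pdim) → ℝ)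
    (f' : EuclideanSpace ℝ (Fin pdim) → EuclideanSpace ℝ (Fin pdim))
    (μ L δ : ℝ) (hμ : 0 < μ) (hL : μ ≤ L) (hδ : δ ∈ Set.Ioc (0 : ℝ) 1)
    (hgrad : ∀ x, HasGradientAt f (f' x) x)
    (hstrong : ConvexOn ℝ Set.univ (fun x => f x - μ / 2 * ‖x‖ ^ 2))
    (hlip : ∀ x y, ‖f' x - f' y‖ ≤ L * ‖x - y‖)
    (d : EuclideanSpace ℝ (Fin pdim) → ℝ) (hd : ∀ x, d x ≤ f x)
    (z : EuclideanSpace ℝ (Fin pdim)) :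
    ∀ x, (1 - δ) * d x +
        δ * (f z + ⟪f' z, x - z⟫ + μ / 2 * ‖x - z‖ ^ 2) ≥
      d x - δ * (L - μ) / 2 * ‖x - z‖ ^ 2 :=
  miso_lower_bound_maintenance_general f f' μ L δ hδ hgrad hlip d hd z
end

section
/- Let ψ: ℝ^p → ℝ ∪ {+∞} be convex, μ > 0, and for z̄ ∈ ℝ^p let D(x) = A + (μ/2)‖x − z̄‖² + ψ(x) with minimizer x̂, and D'(x) = A' + (μ/2)‖x − z̄'‖² + ψ(x) with minimizer x̂'. Then D(x̂') − D(x̂) ≤ (μ/2)‖z̄ − z̄'‖². -/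
/-!
Since `D'` is `μ`-strongly convex and minimised at `x̂'`, it grows quadratically away from it:
`D'(x̂') + (μ/2)‖x̂ - x̂'‖² ≤ D'(x̂)`. Moving the centre from `z̄'` to `z̄` changes `D(x̂') - D(x̂)`
by the affine term `μ⟨x̂' - x̂, z̄' - z̄⟩`, which Young's inequality bounds by
`(μ/2)(‖x̂ - x̂'‖² + ‖z̄ - z̄'‖²)`; the first summand is absorbed by the quadratic growth.
-/

open Filter Set Topology

section

variable {E : Type*} [NormedAddCommGroup E] [InnerProductSpace ℝ E]

lemma norm_smul_add_smul_sub_sq {a b : ℝ} (hab : a + b = 1) (x y z : E) :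
    ‖a • x + b • y - z‖ ^ 2 = a * ‖x - z‖ ^ 2 + b * ‖y - z‖ ^ 2 - a * b * ‖x - y‖ ^ 2 := by
  obtain rfl := eq_sub_of_add_eq hab
  have hcomb : (1 - b) • x + b • y - z = (1 - b) • (x - z) + b • (y - z) := by
    simp only [smul_sub, sub_smul, one_smul]; abel
  have hdiff : x - y = (x - z) - (y - z) := by abel
  rw [hcomb, hdiff]
  generalize x - z = p; generalize y - z = q
  rw [norm_add_sq_real, norm_sub_sq_real, norm_smul, norm_smul, real_inner_smul_left,
    real_inner_smul_right, mul_pow, mul_pow, Real.norm_eq_abs, Real.norm_eq_abs, sq_abs, sq_abs]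
  ring

lemma norm_sub_sq_sub_norm_sub_sq_le (x y z z' : E) :
    ‖y - z‖ ^ 2 - ‖x - z‖ ^ 2 ≤
      ‖y - z'‖ ^ 2 - ‖x - z'‖ ^ 2 + ‖x - y‖ ^ 2 + ‖z - z'‖ ^ 2 := by
  have hsq : ‖y - z‖ ^ 2 - ‖x - z‖ ^ 2 + ‖(y - x) - (z' - z)‖ ^ 2 =
      ‖y - z'‖ ^ 2 - ‖x - z'‖ ^ 2 + ‖x - y‖ ^ 2 + ‖z - z'‖ ^ 2 := by
    simp only [norm_sub_sq_real, inner_sub_left, inner_sub_right]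
    rw [real_inner_comm x y, real_inner_comm z x, real_inner_comm z y, real_inner_comm z' x,
      real_inner_comm z' y, real_inner_comm z' z]
    ring
  linarith [sq_nonneg ‖(y - x) - (z' - z)‖]

lemma add_norm_sub_sq_le_of_isMinimizer (ψ : E → EReal)
    (hψconv : ∀ x y : E, ∀ a b : ℝ, 0 ≤ a → 0 ≤ b → a + b = 1 →
      ψ (a • x + b • y) ≤ (a : EReal) * ψ x + (b : EReal) * ψ y)
    {μ c : ℝ} {z x₀ x : E} {s₀ s : ℝ} (hs₀ : ψ x₀ = s₀) (hs : ψ x = s)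
    (hmin : ∀ y, ((c + μ / 2 * ‖x₀ - z‖ ^ 2 : ℝ) : EReal) + ψ x₀ ≤
      ((c + μ / 2 * ‖y - z‖ ^ 2 : ℝ) : EReal) + ψ y) :
    μ / 2 * ‖x₀ - z‖ ^ 2 + s₀ + μ / 2 * ‖x - x₀‖ ^ 2 ≤ μ / 2 * ‖x - z‖ ^ 2 + s := by
  -- test minimality against `(1 - t) • x₀ + t • x`, divide by `t`, and let `t → 0⁺`
  have hseg : ∀ t ∈ Ioo (0 : ℝ) 1,
      μ / 2 * ‖x₀ - z‖ ^ 2 + s₀ + (1 - t) * (μ / 2 * ‖x - x₀‖ ^ 2) ≤ μ / 2 * ‖x - z‖ ^ 2 + s := by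
    rintro t ⟨ht0, ht1⟩
    have hconv : ψ ((1 - t) • x₀ + t • x) ≤ (((1 - t) * s₀ + t * s : ℝ) : EReal) := by
      have := hψconv x₀ x (1 - t) t (by linarith) ht0.le (by ring)
      rwa [hs₀, hs, ← EReal.coe_mul, ← EReal.coe_mul, ← EReal.coe_add] at this
    have hle : c + μ / 2 * ‖x₀ - z‖ ^ 2 + s₀ ≤
        c + μ / 2 * ‖(1 - t) • x₀ + t • x - z‖ ^ 2 + ((1 - t) * s₀ + t * s) := by
      have := (hmin _).trans (add_le_add_right hconv _)
      rw [hs₀] at this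
      exact_mod_cast this
    rw [norm_smul_add_smul_sub_sq (by ring), norm_sub_rev x₀ x] at hle
    refine le_of_mul_le_mul_left ?_ ht0
    linarith
  have hlim : Tendsto (fun t : ℝ => μ / 2 * ‖x₀ - z‖ ^ 2 + s₀ + (1 - t) * (μ / 2 * ‖x - x₀‖ ^ 2))
      (𝓝[>] 0) (𝓝 (μ / 2 * ‖x₀ - z‖ ^ 2 + s₀ + μ / 2 * ‖x - x₀‖ ^ 2)) :=
    tendsto_nhdsWithin_of_tendsto_nhds ((by fun_prop : Continuous _).tendsto' _ _ (by simp))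
  exact le_of_tendsto hlim (eventually_of_mem (Ioo_mem_nhdsGT one_pos) hseg)

end

theorem prox_center_shift_bound_general
    {pdim : ℕ} (ψ : EuclideanSpace ℝ (Fin pdim) → EReal)
    (hψbot : ∀ x, ψ x ≠ ⊥)
    (hψconv : ∀ x y : EuclideanSpace ℝ (Fin pdim), ∀ a b : ℝ,
      0 ≤ a → 0 ≤ b → a + b = 1 →
        ψ (a • x + b • y) ≤ (a : EReal) * ψ x + (b : EReal) * ψ y)
    (μ A A' : ℝ) (hμ : 0 < μ)
    (zb zb' xhat xhat' : EuclideanSpace ℝ (Fin pdim))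
    (hmin' : ∀ x, ((A' + μ / 2 * ‖xhat' - zb'‖ ^ 2 : ℝ) : EReal) + ψ xhat' ≤
      ((A' + μ / 2 * ‖x - zb'‖ ^ 2 : ℝ) : EReal) + ψ x) :
    (((A + μ / 2 * ‖xhat' - zb‖ ^ 2 : ℝ) : EReal) + ψ xhat') -
        (((A + μ / 2 * ‖xhat - zb‖ ^ 2 : ℝ) : EReal) + ψ xhat) ≤
      ((μ / 2 * ‖zb - zb'‖ ^ 2 : ℝ) : EReal) := by
  by_cases hT : ψ xhat = ⊤
  · rw [hT, EReal.add_top_of_ne_bot (EReal.coe_ne_bot _), EReal.sub_top]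
    exact bot_le
  obtain ⟨s, hs⟩ : ∃ s : ℝ, ψ xhat = s := ⟨_, (EReal.coe_toReal hT (hψbot xhat)).symm⟩
  have hT' : ψ xhat' ≠ ⊤ := fun hT' => by
    have h := hmin' xhat
    rw [hT', hs, EReal.add_top_of_ne_bot (EReal.coe_ne_bot _), ← EReal.coe_add, top_le_iff] at h
    exact EReal.coe_ne_top _ h
  obtain ⟨s', hs'⟩ : ∃ s' : ℝ, ψ xhat' = s' := ⟨_, (EReal.coe_toReal hT' (hψbot xhat')).symm⟩
  have hgrowth := add_norm_sub_sq_le_of_isMinimizer ψ hψconv hs' hs hmin'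
  have hshift := mul_le_mul_of_nonneg_left (norm_sub_sq_sub_norm_sub_sq_le xhat xhat' zb zb')
    (half_pos hμ).le
  rw [hs, hs', ← EReal.coe_add, ← EReal.coe_add, ← EReal.coe_sub, EReal.coe_le_coe_iff]
  linarith

theorem prox_center_shift_bound
    {pdim : ℕ} (ψ : EuclideanSpace ℝ (Fin pdim) → EReal)
    (hψbot : ∀ x, ψ x ≠ ⊥)
    (hψconv : ∀ x y : EuclideanSpace ℝ (Fin pdim), ∀ a b : ℝ,
      0 ≤ a → 0 ≤ b → a + b = 1 →
        ψ (a • x + b • y) ≤ (a : EReal) * ψ x + (b : EReal) * ψ y)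
    (μ A A' : ℝ) (hμ : 0 < μ)
    (zb zb' xhat xhat' : EuclideanSpace ℝ (Fin pdim))
    (hmin : ∀ x, ((A + μ / 2 * ‖xhat - zb‖ ^ 2 : ℝ) : EReal) + ψ xhat ≤
      ((A + μ / 2 * ‖x - zb‖ ^ 2 : ℝ) : EReal) + ψ x)
    (hmin' : ∀ x, ((A' + μ / 2 * ‖xhat' - zb'‖ ^ 2 : ℝ) : EReal) + ψ xhat' ≤
      ((A' + μ / 2 * ‖x - zb'‖ ^ 2 : ℝ) : EReal) + ψ x) :
    (((A + μ / 2 * ‖xhat' - zb‖ ^ 2 : ℝ) : EReal) + ψ xhat') -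
        (((A + μ / 2 * ‖xhat - zb‖ ^ 2 : ℝ) : EReal) + ψ xhat) ≤
      ((μ / 2 * ‖zb - zb'‖ ^ 2 : ℝ) : EReal) :=
  prox_center_shift_bound_general ψ hψbot hψconv μ A A' hμ zb zb' xhat xhat' hmin'
end
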